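/- arXiv:1611.07348 — 4 statements merged into one kernel-verified Lean document; each statement's English description precedes it below -/
import Mathlib

section
/- The additive submonoid of ℕ⁴ generated by the four vectors u₁ = (1,1,0,1), u₂ = (1,0,1,1), u₃ = (0,1,1,1) and u₄ = (0,0,0,1) is exactly the set of all (a,b,c,m) ∈ ℕ⁴ such that a ≤ b+c, b ≤ a+c, c ≤ a+b, a+b+c ≤ 2m, and a+b+c ≡ 0 (mod 2). -/
/-- The additive submonoid of `ℕ⁴` generated by `u₁ = (1,1,0,1)`, `u₂ = (1,0,1,1)`,
`u₃ = (0,1,1,1)`, `u₄ = (0,0,0,1)` is exactly the set of `(a,b,c,m)` with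
`a ≤ b + c`, `b ≤ a + c`, `c ≤ a + b`, `a + b + c ≤ 2m`, and `a + b + c ≡ 0 (mod 2)`. -/
theorem mem_submonoid_closure_iff_ineqs (x : ℕ × ℕ × ℕ × ℕ) :
    x ∈ AddSubmonoid.closure
        ({(1,1,0,1), (1,0,1,1), (0,1,1,1), (0,0,0,1)} : Set (ℕ × ℕ × ℕ × ℕ)) ↔
      x.1 ≤ x.2.1 + x.2.2.1 ∧ x.2.1 ≤ x.1 + x.2.2.1 ∧ x.2.2.1 ≤ x.1 + x.2.1 ∧
        x.1 + x.2.1 + x.2.2.1 ≤ 2 * x.2.2.2 ∧ (x.1 + x.2.1 + x.2.2.1) % 2 = 0 := by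
  constructor
  · intro hx
    induction hx using AddSubmonoid.closure_induction with
    | mem y hy =>
      rcases hy with h | h | h | h <;> subst h <;> simp
    | zero => simp
    | add y z _ _ hy hz =>
      simp only [Prod.fst_add, Prod.snd_add] at *
      omega
  · rintro ⟨h1, h2, h3, h4, h5⟩
    obtain ⟨a, b, c, m⟩ := x
    simp only at h1 h2 h3 h4 h5
    have key : (a, b, c, m) =
        ((a + b - c) / 2) • ((1,1,0,1) : ℕ × ℕ × ℕ × ℕ) +
        ((a + c - b) / 2) • (1,0,1,1) + ((b + c - a) / 2) • (0,1,1,1) +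
        (m - (a + b + c) / 2) • (0,0,0,1) := by
      simp only [Prod.smul_mk, smul_eq_mul, Prod.mk_add_mk, Prod.mk.injEq]
      omega
    rw [key]
    have hs := AddSubmonoid.subset_closure
      (s := ({(1,1,0,1), (1,0,1,1), (0,1,1,1), (0,0,0,1)} : Set (ℕ × ℕ × ℕ × ℕ)))
    exact add_mem (add_mem (add_mem
      (nsmul_mem (hs (by simp)) _) (nsmul_mem (hs (by simp)) _))
      (nsmul_mem (hs (by simp)) _)) (nsmul_mem (hs (by simp)) _)
end

section
/- Let S be the additive submonoid of ℕ⁴ generated by u₁ = (1,1,0,1), u₂ = (1,0,1,1), u₃ = (0,1,1,1) and u₄ = (0,0,0,1), and let P be the set of all (a,b,c,m) ∈ ℕ⁴ such that a ≤ b+c, b ≤ a+c, c ≤ a+b and a+b+c ≤ 2m. Then P is the disjoint union of S and the translate (1,1,1,2)+S; equivalently, every point of P with a+b+c even lies in S, and every point of P with a+b+c odd is of the form (1,1,1,2)+s with s ∈ S. -/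
/-!
Write `σ(a,b,c,m) = a + b + c`. Every generator of `S` lies in `P` and has `σ = 2`, and both
properties are additive, so `S ⊆ {x ∈ P | σ x even}`. Conversely, if `x = (a,b,c,m) ∈ P` and
`σ x = 2r`, then `x = (r-c) u₁ + (r-b) u₂ + (r-a) u₃ + (m-r) u₄`, the coefficients being natural
numbers by the triangle inequalities and `a + b + c ≤ 2m`. Hence `S` is exactly the even part of
`P`, and subtracting `(1,1,1,2)` identifies the odd part of `P` with the even part.
-/

local notation "ℕ⁴" => ℕ × ℕ × ℕ × ℕ

namespace TriangleCone

def P : Set ℕ⁴ :=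
  {x | x.1 ≤ x.2.1 + x.2.2.1 ∧ x.2.1 ≤ x.1 + x.2.2.1 ∧ x.2.2.1 ≤ x.1 + x.2.1 ∧
    x.1 + x.2.1 + x.2.2.1 ≤ 2 * x.2.2.2}

def S : AddSubmonoid ℕ⁴ :=
  AddSubmonoid.closure {(1,1,0,1), (1,0,1,1), (0,1,1,1), (0,0,0,1)}

def evenPart : AddSubmonoid ℕ⁴ where
  carrier := {x | x ∈ P ∧ Even (x.1 + x.2.1 + x.2.2.1)}
  zero_mem' := by simp [P]
  add_mem' := by
    rintro ⟨a, b, c, m⟩ ⟨a', b', c', m'⟩ ⟨⟨h₁, h₂, h₃, h₄⟩, he⟩ ⟨⟨h₁', h₂', h₃', h₄'⟩, he'⟩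
    simp only [P, Set.mem_ofPred_eq, Prod.mk_add_mk, Nat.even_iff] at *
    omega

lemma S_le_evenPart : S ≤ evenPart := by
  refine AddSubmonoid.closure_le.2 ?_
  rintro x (rfl | rfl | rfl | rfl) <;> simp [evenPart, P]

lemma mk_mem_S {a b c m : ℕ} (h₁ : a ≤ b + c) (h₂ : b ≤ a + c) (h₃ : c ≤ a + b)
    (h₄ : a + b + c ≤ 2 * m) (he : Even (a + b + c)) : (a, b, c, m) ∈ S := by
  obtain ⟨r, hr⟩ := he
  have hx : (a, b, c, m) = (r - c) • ((1,1,0,1) : ℕ⁴) + (r - b) • (1,0,1,1) +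
      (r - a) • (0,1,1,1) + (m - r) • (0,0,0,1) := by
    simp only [Prod.ext_iff, Prod.fst_add, Prod.snd_add, Prod.smul_fst, Prod.smul_snd,
      smul_eq_mul]
    omega
  have smul_mem : ∀ u ∈ ({(1,1,0,1), (1,0,1,1), (0,1,1,1), (0,0,0,1)} : Set ℕ⁴), ∀ k : ℕ,
      k • u ∈ S := fun u hu k => S.nsmul_mem (AddSubmonoid.subset_closure hu) k
  rw [hx]
  exact add_mem (add_mem (add_mem (smul_mem _ (by simp) _) (smul_mem _ (by simp) _)) (smul_mem _ (by simp) _))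
    (smul_mem _ (by simp) _)

lemma mem_S_iff {x : ℕ⁴} : x ∈ S ↔ x ∈ P ∧ Even (x.1 + x.2.1 + x.2.2.1) := by
  refine ⟨fun hx => S_le_evenPart hx, ?_⟩
  obtain ⟨a, b, c, m⟩ := x
  rintro ⟨⟨h₁, h₂, h₃, h₄⟩, he⟩
  exact mk_mem_S h₁ h₂ h₃ h₄ he

lemma exists_mem_S_eq_add_iff {x : ℕ⁴} :
    (∃ s ∈ S, x = (1,1,1,2) + s) ↔ x ∈ P ∧ Odd (x.1 + x.2.1 + x.2.2.1) := by
  obtain ⟨a, b, c, m⟩ := x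
  simp only [mem_S_iff, P, Set.mem_ofPred_eq, Nat.even_iff, Nat.odd_iff]
  constructor
  · rintro ⟨⟨a', b', c', m'⟩, hs, hx⟩
    simp only [Prod.mk_add_mk, Prod.mk.injEq] at hs hx
    omega
  · rintro ⟨⟨h₁, h₂, h₃, h₄⟩, ho⟩
    refine ⟨(a - 1, b - 1, c - 1, m - 2), ?_, ?_⟩
    · dsimp only
      omega
    · simp only [Prod.mk_add_mk, Prod.mk.injEq]
      omega

lemma mem_image_add_S_iff {x : ℕ⁴} :
    x ∈ (fun s => (1,1,1,2) + s) '' (S : Set ℕ⁴) ↔ x ∈ P ∧ Odd (x.1 + x.2.1 + x.2.2.1) := by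
  simp only [Set.mem_image, SetLike.mem_coe, eq_comm (b := x), exists_mem_S_eq_add_iff]

end TriangleCone

open TriangleCone in
/-- `P` is the disjoint union of `S` and `(1,1,1,2) + S`, where `S` is the submonoid of `ℕ⁴`
generated by `u₁ = (1,1,0,1)`, `u₂ = (1,0,1,1)`, `u₃ = (0,1,1,1)`, `u₄ = (0,0,0,1)` and
`P = {(a,b,c,m) | a ≤ b + c, b ≤ a + c, c ≤ a + b, a + b + c ≤ 2m}`; moreover the points of
`P` with `a + b + c` even lie in `S` and those with `a + b + c` odd lie in `(1,1,1,2) + S`. -/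
theorem P_eq_disjoint_union_S_translate :
    letI S : Set (ℕ × ℕ × ℕ × ℕ) :=
      (AddSubmonoid.closure
        ({(1,1,0,1), (1,0,1,1), (0,1,1,1), (0,0,0,1)} : Set (ℕ × ℕ × ℕ × ℕ)) : Set _)
    letI P : Set (ℕ × ℕ × ℕ × ℕ) :=
      {x | x.1 ≤ x.2.1 + x.2.2.1 ∧ x.2.1 ≤ x.1 + x.2.2.1 ∧ x.2.2.1 ≤ x.1 + x.2.1 ∧
        x.1 + x.2.1 + x.2.2.1 ≤ 2 * x.2.2.2}
    P = S ∪ (fun s => (1,1,1,2) + s) '' S ∧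
      Disjoint S ((fun s => (1,1,1,2) + s) '' S) ∧
      (∀ x ∈ P, Even (x.1 + x.2.1 + x.2.2.1) → x ∈ S) ∧
      (∀ x ∈ P, Odd (x.1 + x.2.1 + x.2.2.1) → ∃ s ∈ S, x = (1,1,1,2) + s) := by
  refine ⟨?_, ?_, fun x hx he => mem_S_iff.2 ⟨hx, he⟩,
    fun x hx ho => exists_mem_S_eq_add_iff.2 ⟨hx, ho⟩⟩
  · ext x
    change x ∈ P ↔ x ∈ S ∨ x ∈ (fun s => (1,1,1,2) + s) '' (S : Set ℕ⁴)
    rw [mem_S_iff, mem_image_add_S_iff, ← and_or_left]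
    exact (and_iff_left (Nat.even_or_odd _)).symm
  · exact Set.disjoint_left.2 fun x hxS hxT =>
      Nat.not_even_iff_odd.2 (mem_image_add_S_iff.1 hxT).2 (mem_S_iff.1 hxS).2
end

section
/- Let T be a type, let D ⊆ ℕ⁴ be closed under addition of each of the vectors u₁ = (1,1,0,1), u₂ = (1,0,1,1), u₃ = (0,1,1,1), u₄ = (0,0,0,1), and let f : ℕ⁴ → T satisfy f(x+uᵢ) = f(x) for every x ∈ D and every i ∈ {1,2,3,4}. Then for all (a,b,c,m) and (a',b',c',m') in D with a+b+c ≡ a'+b'+c' (mod 2), one has f(a,b,c,m) = f(a',b',c',m'). -/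
/-!
Every vector `v` in the additive monoid generated by `u₁, …, u₄` is a translation preserving `D`
and `f`. Since `u₁ + u₂ + u₃ = (2,2,2,3)`, suitable combinations of `u₁, u₂, u₃` move any point
`(a,b,c,m)` to a point with three equal first coordinates, and this common value can be any large
enough number of the parity of `a + b + c`; `u₄` then equalises the last coordinate. So two points
of `D` of the same parity have a common translate, on which `f` agrees with both.
-/

section InvariantTranslations

variable {M T : Type*} [AddMonoid M]

def invariantTranslations (D : Set M) (f : M → T) : AddSubmonoid M where
  carrier := {v | ∀ x ∈ D, x + v ∈ D ∧ f (x + v) = f x}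
  zero_mem' x hx := by simpa using hx
  add_mem' {v w} hv hw x hx := by
    obtain ⟨hxv, hfv⟩ := hv x hx
    obtain ⟨hxvw, hfvw⟩ := hw _ hxv
    rw [← add_assoc]
    exact ⟨hxvw, hfvw.trans hfv⟩

theorem closure_le_invariantTranslations {S D : Set M} {f : M → T}
    (hD : ∀ u ∈ S, ∀ x ∈ D, x + u ∈ D) (hf : ∀ u ∈ S, ∀ x ∈ D, f (x + u) = f x) :
    AddSubmonoid.closure S ≤ invariantTranslations D f :=
  AddSubmonoid.closure_le.2 fun u hu x hx => ⟨hD u hu x hx, hf u hu x hx⟩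

theorem eq_of_add_eq_add_of_mem_invariantTranslations {D : Set M} {f : M → T} {x y v w : M}
    (hx : x ∈ D) (hy : y ∈ D) (hv : v ∈ invariantTranslations D f)
    (hw : w ∈ invariantTranslations D f) (h : x + v = y + w) : f x = f y := by
  rw [← (hv x hx).2, h, (hw y hy).2]

end InvariantTranslations

theorem exists_add_eq_add_of_parity_eq (x y : ℕ × ℕ × ℕ × ℕ)
    (hpar : (x.1 + x.2.1 + x.2.2.1) % 2 = (y.1 + y.2.1 + y.2.2.1) % 2) :
    ∃ v ∈ AddSubmonoid.closure
        ({(1,1,0,1), (1,0,1,1), (0,1,1,1), (0,0,0,1)} : Set (ℕ × ℕ × ℕ × ℕ)),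
      ∃ w ∈ AddSubmonoid.closure
        ({(1,1,0,1), (1,0,1,1), (0,1,1,1), (0,0,0,1)} : Set (ℕ × ℕ × ℕ × ℕ)),
      x + v = y + w := by
  obtain ⟨a, b, c, m⟩ := x
  obtain ⟨a', b', c', m'⟩ := y
  set s := a + b + c
  set s' := a' + b' + c'
  obtain ⟨t, ht⟩ : ∃ t, s + s' = 2 * t := ⟨(s + s') / 2, by omega⟩
  have combination_mem (p q r k : ℕ) : p • ((1,1,0,1) : ℕ × ℕ × ℕ × ℕ) + q • (1,0,1,1) +
      r • (0,1,1,1) + k • (0,0,0,1) ∈ AddSubmonoid.closure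
        ({(1,1,0,1), (1,0,1,1), (0,1,1,1), (0,0,0,1)} : Set (ℕ × ℕ × ℕ × ℕ)) := by
    refine add_mem (add_mem (add_mem ?_ ?_) ?_) ?_ <;>
      exact nsmul_mem (AddSubmonoid.subset_closure (by simp)) _
  -- both sides become `(2s + s', 2s + s', 2s + s', m + m' + 4s + s' + 3t)`
  refine ⟨_, combination_mem (c + t) (b + t) (a + t) (m' + s' + 3 * s), _,
    combination_mem (c' + s) (b' + s) (a' + s) (m + s + 3 * t), ?_⟩
  simp only [Prod.smul_mk, smul_eq_mul, Prod.mk_add_mk, Prod.mk.injEq]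
  omega

/-- If `D ⊆ ℕ⁴` is closed under addition of `u₁ = (1,1,0,1)`, `u₂ = (1,0,1,1)`,
`u₃ = (0,1,1,1)`, `u₄ = (0,0,0,1)`, and `f : ℕ⁴ → T` satisfies `f (x + uᵢ) = f x` for all
`x ∈ D` and each `i`, then `f` takes the same value at any two points of `D` whose
coordinate sums `a + b + c` have the same parity. -/
theorem constant_on_parity_classes {T : Type*} (D : Set (ℕ × ℕ × ℕ × ℕ))
    (hD : ∀ u ∈ ({(1,1,0,1), (1,0,1,1), (0,1,1,1), (0,0,0,1)} : Set (ℕ × ℕ × ℕ × ℕ)),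
      ∀ x ∈ D, x + u ∈ D)
    (f : ℕ × ℕ × ℕ × ℕ → T)
    (hf : ∀ u ∈ ({(1,1,0,1), (1,0,1,1), (0,1,1,1), (0,0,0,1)} : Set (ℕ × ℕ × ℕ × ℕ)),
      ∀ x ∈ D, f (x + u) = f x)
    (x y : ℕ × ℕ × ℕ × ℕ) (hx : x ∈ D) (hy : y ∈ D)
    (hpar : (x.1 + x.2.1 + x.2.2.1) % 2 = (y.1 + y.2.1 + y.2.2.1) % 2) :
    f x = f y := by
  obtain ⟨v, hv, w, hw, hvw⟩ := exists_add_eq_add_of_parity_eq x y hpar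
  have hle := closure_le_invariantTranslations hD hf
  exact eq_of_add_eq_add_of_mem_invariantTranslations hx hy (hle hv) (hle hw) hvw
end

section
/- Let K be a function assigning a natural number to every triple of partitions, such that: (i) K is invariant under conjugating any two of its three arguments, i.e. K(λ,μ,ν) = K(λ',μ',ν) = K(λ',μ,ν') = K(λ,μ',ν') for all partitions λ, μ, ν of the same weight; (ii) K(λ,μ,ν) ≤ K(λ⊕(1,0), μ⊕(1,0), ν⊕(1,0)) for all partitions λ, μ, ν of the same weight; and (iii) K(λ,μ,ν) ≤ K(λ⊕(1,1), μ⊕(1,1), ν⊕(1,1)) for all partitions λ, μ, ν of the same weight. Then for all nonempty partitions λ, μ, ν of the same weight and all natural numbers a, b, c, m with a ≤ b+c, b ≤ a+c, c ≤ a+b and a+b+c ≤ 2m, one has K(λ,μ,ν) ≤ K(λ⊕(m−a,a), μ⊕(m−b,b), ν⊕(m−c,c)). (Note that the hypotheses force a, b, c ≤ m, so m−a, m−b, m−c are natural numbers.) -/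
/-- A list of naturals is a partition if it is weakly decreasing and all parts are positive. -/
def IsPartition (l : List ℕ) : Prop :=
  l.Pairwise (· ≥ ·) ∧ ∀ x ∈ l, 0 < x

/-- `opPQ l p q` is the partition `l ⊕ (p, q)`: add `p` to the first part and
append `q` parts equal to `1`. -/
def opPQ (l : List ℕ) (p q : ℕ) : List ℕ :=
  (l.headD 0 + p) :: (l.tail ++ List.replicate q 1)

/-- The conjugate (transpose) partition: its `i`-th part (for `0 ≤ i < max part`)
is the number of parts of `l` that are greater than `i`. -/
def conjP (l : List ℕ) : List ℕ :=
  (List.range (l.foldr max 0)).map (fun i => (l.filter (fun x => decide (i < x))).length)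

/-!
A triple of shifts `((p₁, q₁), (p₂, q₂), (p₃, q₃))`, adding `pᵢ` boxes to the first row and `qᵢ`
to the first column of the `i`-th diagram, is *monotone* for `K` if it never decreases `K`.
Monotone shifts are closed under addition, so it suffices to write
`((M-a, a), (M-b, b), (M-c, c))` as a sum of basic ones. Hypotheses (ii) and (iii) make
`(1,0)³` and `(1,1)³` monotone. Since conjugation exchanges rows and columns,
`(λ⊕(p,q))' = λ'⊕(q,p)`, conjugating two arguments around (ii) makes
`((1,0),(0,1),(0,1))` and its permutations monotone too. Solving for the coefficients of these
five shifts is possible under the triangle inequalities and `a + b + c ≤ 2M`.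
-/

theorem List.ext_getD_of_pos {l l' : List ℕ} (hl : ∀ x ∈ l, 0 < x) (hl' : ∀ x ∈ l', 0 < x)
    (h : ∀ i, l.getD i 0 = l'.getD i 0) : l = l' := by
  have key {L : List ℕ} (hL : ∀ x ∈ L, 0 < x) (i : ℕ) :
      L[i]? = if L.getD i 0 = 0 then none else some (L.getD i 0) := by
    rcases hi : L[i]? with _ | x
    · simp [List.getD_eq_getElem?_getD, hi]
    · simp [List.getD_eq_getElem?_getD, hi, (hL x (List.mem_of_getElem? hi)).ne']
  ext1 i
  rw [key hl, key hl', h]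

theorem List.getD_le_of_forall_le {l : List ℕ} {b : ℕ} (h : ∀ x ∈ l, x ≤ b) (j : ℕ) :
    l.getD j 0 ≤ b := by
  rw [List.getD_eq_getElem?_getD]
  rcases hj : l[j]? with _ | x
  · simp
  · exact h x (List.mem_of_getElem? hj)

theorem List.sum_map_ite_one_zero {α : Type*} (l : List α) (p : α → Bool) :
    (l.map fun a => if p a then 1 else 0).sum = l.countP p := by
  induction l with
  | nil => rfl
  | cons a t ih => simp [List.countP_cons, ih, add_comm]

theorem List.countP_range_lt {k M : ℕ} (h : k ≤ M) : (List.range M).countP (· < k) = k := by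
  obtain ⟨d, rfl⟩ := Nat.exists_eq_add_of_le h
  rw [List.range_add, List.countP_append, List.countP_map,
    List.countP_eq_length.2 (by simp), List.countP_eq_zero.2 (by simp)]
  simp

theorem List.sum_map_countP_lt_range (l : List ℕ) {M : ℕ} (h : ∀ x ∈ l, x ≤ M) :
    ((List.range M).map fun i => l.countP (i < ·)).sum = l.sum := by
  induction l with
  | nil => simp
  | cons x t ih =>
    simp only [List.countP_cons, List.sum_map_add, List.forall_mem_cons] at h ⊢
    rw [ih h.2, List.sum_map_ite_one_zero, List.countP_range_lt h.1, List.sum_cons, add_comm]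

theorem List.lt_countP_iff_lt_getD {l : List ℕ} (hl : l.Pairwise (· ≥ ·)) (i j : ℕ) :
    j < l.countP (i < ·) ↔ i < l.getD j 0 := by
  induction l generalizing j with
  | nil => simp
  | cons x t ih =>
    rw [List.pairwise_cons] at hl
    have hle : ∀ y ∈ x :: t, y ≤ x := List.forall_mem_cons.2 ⟨le_rfl, hl.1⟩
    by_cases hix : i < x
    · cases j <;> simp [hix, ih hl.2]
    · have hzero : (x :: t).countP (i < ·) = 0 :=
        List.countP_eq_zero.2 fun y hy => by simpa using (hle y hy).trans (not_lt.1 hix)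
      have := List.getD_le_of_forall_le hle j
      simp only [hzero, Nat.not_lt_zero, false_iff, not_lt]
      omega

theorem conjP_eq_map_countP (l : List ℕ) :
    conjP l = (List.range (l.foldr max 0)).map fun i => l.countP (i < ·) := by
  simp [conjP, List.countP_eq_length_filter]

theorem conjP_getD (l : List ℕ) (i : ℕ) : (conjP l).getD i 0 = l.countP (i < ·) := by
  rcases lt_or_ge i (l.foldr max 0) with hi | hi
  · simp [conjP_eq_map_countP, List.getD_eq_getElem?_getD, hi]
  · rw [List.getD_eq_default _ _ (by simpa [conjP_eq_map_countP]), eq_comm, List.countP_eq_zero]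
    intro x hx
    simpa using (List.le_max_of_le hx le_rfl).trans hi

theorem conjP_pos (l : List ℕ) : ∀ x ∈ conjP l, 0 < x := by
  simp only [conjP_eq_map_countP, List.mem_map, List.mem_range]
  rintro _ ⟨i, hi, rfl⟩
  refine List.countP_pos_iff.2 ?_
  by_contra! h
  exact absurd hi (not_lt.2 (List.max_le_of_forall_le l i (by simpa using h)))

theorem isPartition_conjP (l : List ℕ) : IsPartition (conjP l) := by
  refine ⟨?_, conjP_pos l⟩
  rw [conjP_eq_map_countP, List.pairwise_map]
  exact List.pairwise_lt_range.imp fun hij =>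
    List.countP_mono_left fun x _ => by simpa using hij.le.trans_lt

theorem conjP_ne_nil {l : List ℕ} (hl : IsPartition l) (hne : l ≠ []) : conjP l ≠ [] := by
  obtain ⟨x, hx⟩ := List.exists_mem_of_ne_nil l hne
  have hmax : 0 < l.foldr max 0 := (hl.2 x hx).trans_le (List.le_max_of_le hx le_rfl)
  simpa [conjP_eq_map_countP] using hmax.ne'

theorem conjP_sum (l : List ℕ) : (conjP l).sum = l.sum := by
  rw [conjP_eq_map_countP]
  exact List.sum_map_countP_lt_range l fun x hx => List.le_max_of_le hx le_rfl

theorem conjP_conjP {l : List ℕ} (hl : IsPartition l) : conjP (conjP l) = l := by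
  refine List.ext_getD_of_pos (conjP_pos _) hl.2 fun j => ?_
  calc (conjP (conjP l)).getD j 0 = (conjP l).countP (j < ·) := conjP_getD _ j
    _ = (List.range (l.foldr max 0)).countP (· < l.getD j 0) := by
        simp only [conjP_eq_map_countP, List.countP_map]
        exact List.countP_congr fun i _ => by simp [List.lt_countP_iff_lt_getD hl.1]
    _ = l.getD j 0 :=
        List.countP_range_lt (List.getD_le_of_forall_le (fun x hx => List.le_max_of_le hx le_rfl) j)

theorem opPQ_opPQ (l : List ℕ) (p₁ q₁ p₂ q₂ : ℕ) :
    opPQ (opPQ l p₁ q₁) p₂ q₂ = opPQ l (p₁ + p₂) (q₁ + q₂) := by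
  simp [opPQ, add_assoc]

theorem opPQ_zero_zero {l : List ℕ} (hne : l ≠ []) : opPQ l 0 0 = l := by
  cases l with
  | nil => contradiction
  | cons x t => simp [opPQ]

theorem opPQ_ne_nil (l : List ℕ) (p q : ℕ) : opPQ l p q ≠ [] := List.cons_ne_nil _ _

theorem sum_opPQ (l : List ℕ) (p q : ℕ) : (opPQ l p q).sum = l.sum + p + q := by
  cases l <;> simp [opPQ]; ring

theorem opPQ_zero_left {l : List ℕ} (hne : l ≠ []) (q : ℕ) :
    opPQ l 0 q = l ++ List.replicate q 1 := by
  cases l with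
  | nil => contradiction
  | cons x t => simp [opPQ]

theorem getD_opPQ_zero_right {l : List ℕ} (hne : l ≠ []) (p i : ℕ) :
    (opPQ l p 0).getD i 0 = l.getD i 0 + if i = 0 then p else 0 := by
  cases l with
  | nil => contradiction
  | cons x t => cases i <;> simp [opPQ]

theorem isPartition_opPQ {l : List ℕ} (hl : IsPartition l) (hne : l ≠ []) (p q : ℕ) :
    IsPartition (opPQ l p q) := by
  obtain ⟨hsort, hpos⟩ := hl
  cases l with
  | nil => contradiction
  | cons x t =>
    simp only [List.pairwise_cons, List.forall_mem_cons] at hsort hpos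
    simp only [IsPartition, opPQ, List.headD_cons, List.tail_cons, List.pairwise_cons,
      List.pairwise_append, List.mem_append, List.mem_replicate, List.forall_mem_cons]
    refine ⟨⟨?_, hsort.2, List.pairwise_replicate.2 (Or.inr le_rfl), ?_⟩, by omega, ?_⟩
    · rintro y (hy | ⟨-, rfl⟩)
      · exact (hsort.1 y hy).trans (Nat.le_add_right x p)
      · omega
    · rintro y hy _ ⟨-, rfl⟩
      exact hpos.2 y hy
    · rintro y (hy | ⟨-, rfl⟩)
      · exact hpos.2 y hy
      · exact one_pos

theorem conjP_opPQ_zero_left {l : List ℕ} (hl : IsPartition l) (hne : l ≠ []) (q : ℕ) :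
    conjP (opPQ l 0 q) = opPQ (conjP l) q 0 := by
  have hc := isPartition_conjP l
  have hcne := conjP_ne_nil hl hne
  refine List.ext_getD_of_pos (conjP_pos _) (isPartition_opPQ hc hcne q 0).2 fun i => ?_
  rw [conjP_getD, opPQ_zero_left hne, List.countP_append, List.countP_replicate,
    getD_opPQ_zero_right hcne, conjP_getD]
  simp

theorem conjP_opPQ {l : List ℕ} (hl : IsPartition l) (hne : l ≠ []) (p q : ℕ) :
    conjP (opPQ l p q) = opPQ (conjP l) q p := by
  have hc := isPartition_conjP l
  have hcne := conjP_ne_nil hl hne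
  have hrow : conjP (opPQ l p 0) = opPQ (conjP l) 0 p := by
    rw [← conjP_conjP (isPartition_opPQ hc hcne 0 p), conjP_opPQ_zero_left hc hcne,
      conjP_conjP hl]
  calc conjP (opPQ l p q) = conjP (opPQ (opPQ l p 0) 0 q) := by
        rw [opPQ_opPQ, add_zero, zero_add]
    _ = opPQ (conjP (opPQ l p 0)) q 0 :=
        conjP_opPQ_zero_left (isPartition_opPQ hl hne p 0) (opPQ_ne_nil _ _ _) q
    _ = opPQ (conjP l) q p := by rw [hrow, opPQ_opPQ, add_zero, zero_add]

theorem conjP_opPQ_conjP {l : List ℕ} (hl : IsPartition l) (hne : l ≠ []) (p q : ℕ) :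
    conjP (opPQ (conjP l) p q) = opPQ l q p := by
  rw [conjP_opPQ (isPartition_conjP l) (conjP_ne_nil hl hne), conjP_conjP hl]

def ConjInvariant (K : List ℕ → List ℕ → List ℕ → ℕ) : Prop :=
  ∀ l m n : List ℕ, IsPartition l → IsPartition m → IsPartition n →
    l.sum = m.sum → m.sum = n.sum →
    K l m n = K (conjP l) (conjP m) n ∧
    K l m n = K (conjP l) m (conjP n) ∧
    K l m n = K l (conjP m) (conjP n)

/-- The shifts `((p₁, q₁), (p₂, q₂), (p₃, q₃))` with
`K(λ,μ,ν) ≤ K(λ⊕(p₁,q₁), μ⊕(p₂,q₂), ν⊕(p₃,q₃))` for all nonempty partitions of equal weight.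
Requiring `p₁ + q₁ = p₂ + q₂ = p₃ + q₃` keeps the shifted weights equal, which is what makes
these shifts compose. -/
def monotoneShifts (K : List ℕ → List ℕ → List ℕ → ℕ) :
    AddSubmonoid ((ℕ × ℕ) × (ℕ × ℕ) × (ℕ × ℕ)) where
  carrier := {s | s.1.1 + s.1.2 = s.2.1.1 + s.2.1.2 ∧ s.2.1.1 + s.2.1.2 = s.2.2.1 + s.2.2.2 ∧
    ∀ l m n : List ℕ, IsPartition l → IsPartition m → IsPartition n →
      l ≠ [] → m ≠ [] → n ≠ [] → l.sum = m.sum → m.sum = n.sum →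
      K l m n ≤ K (opPQ l s.1.1 s.1.2) (opPQ m s.2.1.1 s.2.1.2) (opPQ n s.2.2.1 s.2.2.2)}
  zero_mem' := ⟨rfl, rfl, fun l m n _ _ _ hl₀ hm₀ hn₀ _ _ => by
    simp [opPQ_zero_zero, hl₀, hm₀, hn₀]⟩
  add_mem' := by
    rintro s t ⟨hs₁₂, hs₂₃, hs⟩ ⟨ht₁₂, ht₂₃, ht⟩
    simp only [Set.mem_ofPred_eq, Prod.fst_add, Prod.snd_add, ← opPQ_opPQ]
    refine ⟨by omega, by omega, fun l m n hl hm hn hl₀ hm₀ hn₀ hlm hmn => ?_⟩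
    exact (hs l m n hl hm hn hl₀ hm₀ hn₀ hlm hmn).trans <| ht _ _ _
      (isPartition_opPQ hl hl₀ _ _) (isPartition_opPQ hm hm₀ _ _) (isPartition_opPQ hn hn₀ _ _)
      (opPQ_ne_nil _ _ _) (opPQ_ne_nil _ _ _) (opPQ_ne_nil _ _ _)
      (by simp only [sum_opPQ]; omega) (by simp only [sum_opPQ]; omega)

section Swap

variable {K : List ℕ → List ℕ → List ℕ → ℕ} {p₁ q₁ p₂ q₂ p₃ q₃ : ℕ}

theorem mem_monotoneShifts :
    ((p₁, q₁), (p₂, q₂), (p₃, q₃)) ∈ monotoneShifts K ↔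
      p₁ + q₁ = p₂ + q₂ ∧ p₂ + q₂ = p₃ + q₃ ∧
      ∀ l m n : List ℕ, IsPartition l → IsPartition m → IsPartition n →
        l ≠ [] → m ≠ [] → n ≠ [] → l.sum = m.sum → m.sum = n.sum →
        K l m n ≤ K (opPQ l p₁ q₁) (opPQ m p₂ q₂) (opPQ n p₃ q₃) :=
  Iff.rfl

theorem swap₁₂_mem_monotoneShifts (hK : ConjInvariant K)
    (hs : ((p₁, q₁), (p₂, q₂), (p₃, q₃)) ∈ monotoneShifts K) :
    ((q₁, p₁), (q₂, p₂), (p₃, q₃)) ∈ monotoneShifts K := by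
  obtain ⟨h₁₂, h₂₃, hs⟩ := mem_monotoneShifts.1 hs
  refine mem_monotoneShifts.2
    ⟨by omega, by omega, fun l m n hl hm hn hl₀ hm₀ hn₀ hlm hmn => ?_⟩
  calc K l m n = K (conjP l) (conjP m) n := (hK l m n hl hm hn hlm hmn).1
    _ ≤ K (opPQ (conjP l) p₁ q₁) (opPQ (conjP m) p₂ q₂) (opPQ n p₃ q₃) :=
        hs _ _ _ (isPartition_conjP l) (isPartition_conjP m) hn (conjP_ne_nil hl hl₀)
          (conjP_ne_nil hm hm₀) hn₀ (by rwa [conjP_sum, conjP_sum]) (by rwa [conjP_sum])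
    _ = K (conjP (opPQ (conjP l) p₁ q₁)) (conjP (opPQ (conjP m) p₂ q₂)) (opPQ n p₃ q₃) :=
        (hK _ _ _ (isPartition_opPQ (isPartition_conjP l) (conjP_ne_nil hl hl₀) _ _)
          (isPartition_opPQ (isPartition_conjP m) (conjP_ne_nil hm hm₀) _ _)
          (isPartition_opPQ hn hn₀ _ _)
          (by simp only [sum_opPQ, conjP_sum]; omega)
          (by simp only [sum_opPQ, conjP_sum]; omega)).1
    _ = K (opPQ l q₁ p₁) (opPQ m q₂ p₂) (opPQ n p₃ q₃) := by
        rw [conjP_opPQ_conjP hl hl₀, conjP_opPQ_conjP hm hm₀]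

theorem swap₁₃_mem_monotoneShifts (hK : ConjInvariant K)
    (hs : ((p₁, q₁), (p₂, q₂), (p₃, q₃)) ∈ monotoneShifts K) :
    ((q₁, p₁), (p₂, q₂), (q₃, p₃)) ∈ monotoneShifts K := by
  obtain ⟨h₁₂, h₂₃, hs⟩ := mem_monotoneShifts.1 hs
  refine mem_monotoneShifts.2
    ⟨by omega, by omega, fun l m n hl hm hn hl₀ hm₀ hn₀ hlm hmn => ?_⟩
  calc K l m n = K (conjP l) m (conjP n) := (hK l m n hl hm hn hlm hmn).2.1
    _ ≤ K (opPQ (conjP l) p₁ q₁) (opPQ m p₂ q₂) (opPQ (conjP n) p₃ q₃) :=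
        hs _ _ _ (isPartition_conjP l) hm (isPartition_conjP n) (conjP_ne_nil hl hl₀) hm₀
          (conjP_ne_nil hn hn₀) (by rwa [conjP_sum]) (by rwa [conjP_sum])
    _ = K (conjP (opPQ (conjP l) p₁ q₁)) (opPQ m p₂ q₂) (conjP (opPQ (conjP n) p₃ q₃)) :=
        (hK _ _ _ (isPartition_opPQ (isPartition_conjP l) (conjP_ne_nil hl hl₀) _ _)
          (isPartition_opPQ hm hm₀ _ _)
          (isPartition_opPQ (isPartition_conjP n) (conjP_ne_nil hn hn₀) _ _)
          (by simp only [sum_opPQ, conjP_sum]; omega)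
          (by simp only [sum_opPQ, conjP_sum]; omega)).2.1
    _ = K (opPQ l q₁ p₁) (opPQ m p₂ q₂) (opPQ n q₃ p₃) := by
        rw [conjP_opPQ_conjP hl hl₀, conjP_opPQ_conjP hn hn₀]

theorem swap₂₃_mem_monotoneShifts (hK : ConjInvariant K)
    (hs : ((p₁, q₁), (p₂, q₂), (p₃, q₃)) ∈ monotoneShifts K) :
    ((p₁, q₁), (q₂, p₂), (q₃, p₃)) ∈ monotoneShifts K := by
  obtain ⟨h₁₂, h₂₃, hs⟩ := mem_monotoneShifts.1 hs
  refine mem_monotoneShifts.2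
    ⟨by omega, by omega, fun l m n hl hm hn hl₀ hm₀ hn₀ hlm hmn => ?_⟩
  calc K l m n = K l (conjP m) (conjP n) := (hK l m n hl hm hn hlm hmn).2.2
    _ ≤ K (opPQ l p₁ q₁) (opPQ (conjP m) p₂ q₂) (opPQ (conjP n) p₃ q₃) :=
        hs _ _ _ hl (isPartition_conjP m) (isPartition_conjP n) hl₀ (conjP_ne_nil hm hm₀)
          (conjP_ne_nil hn hn₀) (by rwa [conjP_sum]) (by rwa [conjP_sum, conjP_sum])
    _ = K (opPQ l p₁ q₁) (conjP (opPQ (conjP m) p₂ q₂)) (conjP (opPQ (conjP n) p₃ q₃)) :=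
        (hK _ _ _ (isPartition_opPQ hl hl₀ _ _)
          (isPartition_opPQ (isPartition_conjP m) (conjP_ne_nil hm hm₀) _ _)
          (isPartition_opPQ (isPartition_conjP n) (conjP_ne_nil hn hn₀) _ _)
          (by simp only [sum_opPQ, conjP_sum]; omega)
          (by simp only [sum_opPQ, conjP_sum]; omega)).2.2
    _ = K (opPQ l p₁ q₁) (opPQ m q₂ p₂) (opPQ n q₃ p₃) := by
        rw [conjP_opPQ_conjP hm hm₀, conjP_opPQ_conjP hn hn₀]

end Swap

def basicShifts : Set ((ℕ × ℕ) × (ℕ × ℕ) × (ℕ × ℕ)) :=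
  {((1, 0), (1, 0), (1, 0)), ((1, 1), (1, 1), (1, 1)),
    ((1, 0), (0, 1), (0, 1)), ((0, 1), (1, 0), (0, 1)), ((0, 1), (0, 1), (1, 0))}

theorem closure_basicShifts_le_monotoneShifts {K : List ℕ → List ℕ → List ℕ → ℕ}
    (hK : ConjInvariant K) (hrow : ((1, 0), (1, 0), (1, 0)) ∈ monotoneShifts K)
    (hhook : ((1, 1), (1, 1), (1, 1)) ∈ monotoneShifts K) :
    AddSubmonoid.closure basicShifts ≤ monotoneShifts K := by
  rw [AddSubmonoid.closure_le]
  simp only [basicShifts, Set.insert_subset_iff, Set.singleton_subset_iff, SetLike.mem_coe]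
  exact ⟨hrow, hhook, swap₂₃_mem_monotoneShifts hK hrow, swap₁₃_mem_monotoneShifts hK hrow,
    swap₁₂_mem_monotoneShifts hK hrow⟩

theorem mem_closure_basicShifts {a b c M : ℕ} (hab : a ≤ b + c) (hbc : b ≤ a + c)
    (hca : c ≤ a + b) (habcM : a + b + c ≤ 2 * M) :
    ((M - a, a), (M - b, b), (M - c, c)) ∈ AddSubmonoid.closure basicShifts := by
  -- `x` is the parity of `a + b + c`; the triangle inequalities make the three mixed
  -- coefficients natural numbers, and `a + b + c ≤ 2 * M` the first one.
  set x := (a + b + c) % 2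
  have hdecomp : ((M - a, a), (M - b, b), (M - c, c)) =
      (M - (a + b + c + x) / 2) • ((1, 0), (1, 0), (1, 0)) + x • ((1, 1), (1, 1), (1, 1)) +
      ((b + c - a - x) / 2) • ((1, 0), (0, 1), (0, 1)) +
      ((a + c - b - x) / 2) • ((0, 1), (1, 0), (0, 1)) +
      ((a + b - c - x) / 2) • ((0, 1), (0, 1), (1, 0)) := by
    simp only [Prod.smul_mk, smul_eq_mul, Prod.mk_add_mk, Prod.mk.injEq]
    omega
  rw [hdecomp]
  refine add_mem (add_mem (add_mem (add_mem ?_ ?_) ?_) ?_) ?_ <;>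
    exact AddSubmonoid.nsmul_mem _ (AddSubmonoid.subset_closure (by simp [basicShifts])) _

/-- If `K` is invariant under conjugating any two of its arguments, satisfies Murnaghan's
monotonicity `K(λ,μ,ν) ≤ K(λ⊕(1,0), μ⊕(1,0), ν⊕(1,0))` (hypothesis (ii)) and the
monotonicity `K(λ,μ,ν) ≤ K(λ⊕(1,1), μ⊕(1,1), ν⊕(1,1))` of Conjecture 5.10 (hypothesis
(iii)), then for all nonempty partitions of the same weight and all `a, b, c, m` with
`a ≤ b + c`, `b ≤ a + c`, `c ≤ a + b` and `a + b + c ≤ 2m`, one has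
`K(λ,μ,ν) ≤ K(λ⊕(m-a,a), μ⊕(m-b,b), ν⊕(m-c,c))` (Conjecture 5.11). -/
theorem general_monotonicity (K : List ℕ → List ℕ → List ℕ → ℕ)
    (hconj : ∀ l m n : List ℕ, IsPartition l → IsPartition m → IsPartition n →
      l.sum = m.sum → m.sum = n.sum →
      K l m n = K (conjP l) (conjP m) n ∧
      K l m n = K (conjP l) m (conjP n) ∧
      K l m n = K l (conjP m) (conjP n))
    (hmono : ∀ l m n : List ℕ, IsPartition l → IsPartition m → IsPartition n →
      l.sum = m.sum → m.sum = n.sum →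
      K l m n ≤ K (opPQ l 1 0) (opPQ m 1 0) (opPQ n 1 0))
    (hmono11 : ∀ l m n : List ℕ, IsPartition l → IsPartition m → IsPartition n →
      l.sum = m.sum → m.sum = n.sum →
      K l m n ≤ K (opPQ l 1 1) (opPQ m 1 1) (opPQ n 1 1))
    (l m n : List ℕ)
    (hl : IsPartition l) (hm : IsPartition m) (hn : IsPartition n)
    (hlne : l ≠ []) (hmne : m ≠ []) (hnne : n ≠ [])
    (hw₁ : l.sum = m.sum) (hw₂ : m.sum = n.sum)
    (a b c M : ℕ) (hab : a ≤ b + c) (hbc : b ≤ a + c) (hca : c ≤ a + b)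
    (habcM : a + b + c ≤ 2 * M) :
    K l m n ≤ K (opPQ l (M - a) a) (opPQ m (M - b) b) (opPQ n (M - c) c) := by
  have hrow : ((1, 0), (1, 0), (1, 0)) ∈ monotoneShifts K :=
    ⟨rfl, rfl, fun l m n hl hm hn _ _ _ => hmono l m n hl hm hn⟩
  have hhook : ((1, 1), (1, 1), (1, 1)) ∈ monotoneShifts K :=
    ⟨rfl, rfl, fun l m n hl hm hn _ _ _ => hmono11 l m n hl hm hn⟩
  have hshift := closure_basicShifts_le_monotoneShifts hconj hrow hhook
    (mem_closure_basicShifts hab hbc hca habcM)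
  exact (mem_monotoneShifts.1 hshift).2.2 l m n hl hm hn hlne hmne hnne hw₁ hw₂
end
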